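/- Fix d, C₁, C₂ ∈ ℝ with C₂ ≠ 0 and d·C₁ = 0. Let U = {(u¹,u²) ∈ ℝ² : u² > 0} and define x : U → ℝ² by x¹ = u¹ and x² = (u²)^{1−d}/(1−d) if d ≠ 1, x² = ln u² if d = 1. Let J(u) be the Jacobian matrix of x at u, and let G be the constant symmetric matrix with rows (C₁, C₂), (C₂, 0). Then J(u)ᵀ G J(u) = (u²)^{−d} G for every u ∈ U; that is, the metric with component matrix (u²)^{−d}G in the coordinates (u¹,u²) has constant component matrix G in the coordinates (x¹,x²). -/
import Mathlib


open Classical Matrix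

/-- Partial derivative of `g : (Fin n → ℝ) → ℝ` with respect to the `i`-th coordinate. -/
noncomputable def pd {n : ℕ} (g : (Fin n → ℝ) → ℝ) (i : Fin n) (u : Fin n → ℝ) : ℝ :=
  deriv (fun t => g (Function.update u i t)) (u i)

/-- The flat coordinates `x¹ = u¹`, `x² = (u²)^{1−d}/(1−d)` (resp. `ln u²` for `d = 1`)
of the two-dimensional regular Dubrovin–Frobenius metric (0-based indices). -/
noncomputable def flatCoord2 (d : ℝ) (u : Fin 2 → ℝ) : Fin 2 → ℝ :=
  ![u 0, if d = 1 then Real.log (u 1) else (u 1) ^ (1 - d) / (1 - d)]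

/-- The Jacobian matrix `J(u)ᵢⱼ = ∂xⁱ/∂uʲ` of `flatCoord2 d` at `u`. -/
noncomputable def jac2 (d : ℝ) (u : Fin 2 → ℝ) : Matrix (Fin 2) (Fin 2) ℝ :=
  Matrix.of fun i j => pd (fun v => flatCoord2 d v i) j u

lemma jac2_eq (d : ℝ) (u : Fin 2 → ℝ) (hu : 0 < u 1) :
    jac2 d u = !![1, 0; 0, (u 1) ^ (-d)] := by
  ext i j
  fin_cases i <;> fin_cases j <;>
    simp [jac2, pd, flatCoord2, Function.update_self,
      Function.update_of_ne (show (0 : Fin 2) ≠ 1 by decide),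
      Function.update_of_ne (show (1 : Fin 2) ≠ 0 by decide)]
  by_cases hd : d = 1
  · simp only [hd, if_true]
    rw [Real.deriv_log]
    exact (Real.rpow_neg_one _).symm
  · simp only [hd, if_false]
    have h : HasDerivAt (fun t : ℝ => t ^ (1 - d) / (1 - d))
        ((1 - d) * (u 1) ^ (1 - d - 1) / (1 - d)) (u 1) :=
      (Real.hasDerivAt_rpow_const (Or.inl hu.ne')).div_const (1 - d)
    rw [h.deriv]
    have h1 : (1 : ℝ) - d ≠ 0 := sub_ne_zero.mpr (Ne.symm hd)
    rw [mul_comm, mul_div_assoc, div_self h1, mul_one, show (1 : ℝ) - d - 1 = -d by ring]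

/-- the coordinates `x¹ = u¹`, `x² = (u²)^{1−d}/(1−d)` (resp. `ln u²` for
`d = 1`) are flat coordinates for the metric `(u²)^{−d}·[[C₁,C₂],[C₂,0]]`:
`J(u)ᵀ G J(u) = (u²)^{−d} G` with `G = [[C₁,C₂],[C₂,0]]`. -/
theorem stmt_6 (d C₁ C₂ : ℝ) (hC₂ : C₂ ≠ 0) (hdC₁ : d * C₁ = 0) :
    ∀ u : Fin 2 → ℝ, 0 < u 1 →
      (jac2 d u)ᵀ * !![C₁, C₂; C₂, 0] * jac2 d u
        = (u 1) ^ (-d) • !![C₁, C₂; C₂, 0] := by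
  intro u hu
  rw [jac2_eq d u hu]
  have hC : C₁ = (u 1) ^ (-d) * C₁ := by
    rcases mul_eq_zero.mp hdC₁ with h | h
    · simp [h]
    · simp [h]
  ext i j
  fin_cases i <;> fin_cases j <;>
    simp [Matrix.mul_apply, Fin.sum_univ_two, Matrix.transpose_apply, Matrix.vecHead,
      Matrix.vecTail, Matrix.smul_apply, smul_eq_mul] <;>
    nlinarith [hC]
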